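/- Fix σ_M > 0 and set p = Φ(−1/σ_M). For each σ_W > 0, set σ² = σ_M² + σ_W², p_W = Φ(−1/√(σ_M² + σ_W²)), and let I(X;W) denote the mutual information between X uniform on {−1,1} and W = X + N, where N is an independent Gaussian with mean 0 and variance σ². Then the maximum equivocation loss tends to zero as the wiretap noise power grows: lim_{σ_W → ∞} (h(p_W) − 1 + I(X;W)) / (h(p_W) − h(p)) = 0. -/

import Mathlib

open MeasureTheory ProbabilityTheory Filter
open scoped NNReal ENNReal

/-- Binary entropy function (base 2). -/
noncomputable def binEnt (x : ℝ) : ℝ := -(x * Real.logb 2 x) - (1 - x) * Real.logb 2 (1 - x)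

/-- The cumulative distribution function of the standard normal distribution. -/
noncomputable def stdNormalCDF (x : ℝ) : ℝ := ((gaussianReal 0 1) (Set.Iic x)).toReal

/-- Kullback–Leibler divergence in bits: `∫ log(dμ/dν) dμ / log 2`. -/
noncomputable def klBits {α : Type*} [MeasurableSpace α] (μ ν : Measure α) : ℝ :=
  (∫ x, llr μ ν x ∂μ) / Real.log 2

/-- The joint law of `(X, W)` where `X` is uniform on `{-1,1}` and `W = X + N` with `N`
an independent Gaussian of mean `0` and variance `σ²`. -/
noncomputable def jointLawXW (σ : ℝ) : Measure (ℝ × ℝ) :=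
  (2 : ℝ≥0∞)⁻¹ • Measure.map (fun n => ((1 : ℝ), 1 + n)) (gaussianReal 0 (σ ^ 2).toNNReal)
    + (2 : ℝ≥0∞)⁻¹ • Measure.map (fun n => ((-1 : ℝ), -1 + n)) (gaussianReal 0 (σ ^ 2).toNNReal)

/-- `I(X;W)` (in bits) for `X` uniform on `{-1,1}` and `W = X + N`, `N` Gaussian with
mean `0` and variance `σ²`: the KL divergence of the joint law from the product of the
marginal laws. -/
noncomputable def mutualInfoAntipodalAWGN (σ : ℝ) : ℝ :=
  klBits (jointLawXW σ) ((jointLawXW σ).fst.prod (jointLawXW σ).snd)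

/-!
As `σ_W → ∞` we have `p_W → Φ(0) = 1/2`, so `h(p_W) → 1`, while `h(p) < 1` because `p < 1/2`;
it remains to show `I(X;W) → 0`. The joint law and the product of the marginals both have
densities with respect to (uniform sign) ⊗ Lebesgue, with ratio `2 / (1 + exp (-2xw/σ²))` at
`(x, w)`. Since `X·W = 1 + σZ` with `Z` standard normal on either value of `X`, this gives
`I(X;W) · log 2 = log 2 - E[softplus (-2(1 + σZ)/σ²)]`, and dominated convergence
(`softplus t ≤ log 2 + |t|`) sends the expectation to `softplus 0 = log 2`.
-/

open Real

lemma binEnt_eq_binEntropy_div_log_two (x : ℝ) : binEnt x = binEntropy x / log 2 := by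
  rw [binEnt, binEntropy, log_inv, log_inv, logb, logb]
  ring

lemma continuous_binEnt : Continuous binEnt := by
  simpa only [funext binEnt_eq_binEntropy_div_log_two] using binEntropy_continuous.div_const _

lemma binEnt_two_inv : binEnt 2⁻¹ = 1 := by
  rw [binEnt_eq_binEntropy_div_log_two, binEntropy_two_inv, div_self (log_pos one_lt_two).ne']

lemma binEnt_lt_one {x : ℝ} (hx : x ≠ 2⁻¹) : binEnt x < 1 := by
  rw [binEnt_eq_binEntropy_div_log_two, div_lt_one (log_pos one_lt_two)]
  exact binEntropy_lt_log_two.2 hx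

lemma stdNormalCDF_eq_integral (x : ℝ) :
    stdNormalCDF x = ∫ t in Set.Iic x, gaussianPDFReal 0 1 t := by
  rw [stdNormalCDF, gaussianReal_apply_eq_integral 0 one_ne_zero,
    ENNReal.toReal_ofReal (setIntegral_nonneg measurableSet_Iic
      fun t _ => gaussianPDFReal_nonneg 0 1 t)]

lemma stdNormalCDF_sub_stdNormalCDF (x y : ℝ) :
    stdNormalCDF y - stdNormalCDF x = ∫ t in x..y, gaussianPDFReal 0 1 t := by
  rw [stdNormalCDF_eq_integral, stdNormalCDF_eq_integral,
    intervalIntegral.integral_Iic_sub_Iic (integrable_gaussianPDFReal 0 1).integrableOn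
      (integrable_gaussianPDFReal 0 1).integrableOn]

lemma continuous_stdNormalCDF : Continuous stdNormalCDF := by
  have h : stdNormalCDF =
      fun x => stdNormalCDF 0 + ∫ t in (0 : ℝ)..x, gaussianPDFReal 0 1 t := by
    funext x
    rw [← stdNormalCDF_sub_stdNormalCDF, add_sub_cancel]
  rw [h]
  exact continuous_const.add ((integrable_gaussianPDFReal 0 1).continuous_primitive 0)

lemma stdNormalCDF_neg (x : ℝ) : stdNormalCDF (-x) = 1 - stdNormalCDF x := by
  have : NullSingletonClass (gaussianReal 0 1) := nullSingletonClass_gaussianReal one_ne_zero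
  have hsymm : (gaussianReal 0 1).real (Set.Iic (-x)) = (gaussianReal 0 1).real (Set.Ioi x) := by
    conv_lhs => rw [← neg_zero, ← gaussianReal_map_neg]
    rw [map_measureReal_apply measurable_neg measurableSet_Iic, Set.neg_preimage, Set.neg_Iic,
      neg_neg, measureReal_congr Ioi_ae_eq_Ici]
  rw [stdNormalCDF, stdNormalCDF, ← measureReal_def, ← measureReal_def, hsymm,
    ← Set.compl_Iic, probReal_compl_eq_one_sub measurableSet_Iic]

lemma stdNormalCDF_zero : stdNormalCDF 0 = 2⁻¹ := by
  have := stdNormalCDF_neg 0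
  rw [neg_zero] at this
  linarith

lemma stdNormalCDF_lt_two_inv {x : ℝ} (hx : x < 0) : stdNormalCDF x < 2⁻¹ := by
  have hpos : 0 < ∫ t in x..0, gaussianPDFReal 0 1 t :=
    intervalIntegral.intervalIntegral_pos_of_pos_on
      (integrable_gaussianPDFReal 0 1).intervalIntegrable
      (fun t _ => gaussianPDFReal_pos 0 1 t one_ne_zero) hx
  linarith [stdNormalCDF_sub_stdNormalCDF x 0, stdNormalCDF_zero]

noncomputable def softplus (t : ℝ) : ℝ := log (1 + exp t)

lemma softplus_zero : softplus 0 = log 2 := by norm_num [softplus]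

lemma continuous_softplus : Continuous softplus :=
  (continuous_const.add continuous_exp).log fun t => (add_pos one_pos (exp_pos t)).ne'

lemma abs_softplus_le (t : ℝ) : |softplus t| ≤ log 2 + |t| := by
  have hnonneg : 0 ≤ softplus t := log_nonneg (by linarith [exp_pos t])
  rw [abs_of_nonneg hnonneg]
  rcases le_total t 0 with ht | ht
  · calc softplus t ≤ log 2 := log_le_log (by positivity) (by linarith [exp_le_one_iff.2 ht])
      _ ≤ log 2 + |t| := le_add_of_nonneg_right (abs_nonneg t)
  · calc softplus t ≤ log (2 * exp t) := log_le_log (by positivity) (by linarith [one_le_exp ht])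
      _ = log 2 + t := by rw [log_mul two_ne_zero (exp_ne_zero t), log_exp]
      _ ≤ log 2 + |t| := by gcongr; exact le_abs_self t

lemma integrable_abs_gaussianReal (μ : ℝ) (v : ℝ≥0) :
    Integrable (fun z => |z|) (gaussianReal μ v) :=
  ((memLp_id_gaussianReal 1).integrable le_rfl).abs

lemma integrable_softplus_affine (a b : ℝ) :
    Integrable (fun z => softplus (a + b * z)) (gaussianReal 0 1) := by
  refine ((integrable_const (log 2 + |a|)).add
    ((integrable_abs_gaussianReal 0 1).const_mul |b|)).mono'
    (continuous_softplus.comp (by fun_prop)).aestronglyMeasurable (ae_of_all _ fun z => ?_)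
  calc ‖softplus (a + b * z)‖ ≤ log 2 + |a + b * z| := abs_softplus_le _
    _ ≤ log 2 + |a| + |b| * |z| := by rw [← abs_mul]; linarith [abs_add_le a (b * z)]

lemma tendsto_integral_softplus_affine {ι : Type*} {l : Filter ι} [l.IsCountablyGenerated]
    {a b : ι → ℝ} (ha : Tendsto a l (nhds 0)) (hb : Tendsto b l (nhds 0)) :
    Tendsto (fun i => ∫ z, softplus (a i + b i * z) ∂gaussianReal 0 1) l (nhds (log 2)) := by
  have hlim : ∫ z, softplus (0 + 0 * z) ∂gaussianReal 0 1 = log 2 := by simp [softplus_zero]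
  rw [← hlim]
  refine tendsto_integral_filter_of_dominated_convergence (fun z => log 2 + 1 + |z|)
    (Eventually.of_forall fun i => (integrable_softplus_affine (a i) (b i)).aestronglyMeasurable)
    ?_ (((integrable_const _).add (integrable_abs_gaussianReal 0 1)))
    (ae_of_all _ fun z => ?_)
  · filter_upwards [Metric.tendsto_nhds.1 ha 1 one_pos, Metric.tendsto_nhds.1 hb 1 one_pos]
      with i hai hbi
    rw [dist_zero_right, norm_eq_abs] at hai hbi
    refine ae_of_all _ fun z => (abs_softplus_le _).trans ?_
    have : |b i| * |z| ≤ |z| := mul_le_of_le_one_left (abs_nonneg z) hbi.le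
    linarith [abs_add_le (a i) (b i * z), abs_mul (b i) z]
  · exact (continuous_softplus.tendsto _).comp (ha.add (hb.mul_const z))

lemma gaussianPDFReal_neg_mean (μ : ℝ) {v : ℝ≥0} (hv : v ≠ 0) (x : ℝ) :
    gaussianPDFReal (-μ) v x = gaussianPDFReal μ v x * exp (-2 * μ * x / v) := by
  have hv' : (v : ℝ) ≠ 0 := NNReal.coe_ne_zero.2 hv
  rw [gaussianPDFReal, gaussianPDFReal, mul_assoc _ (rexp _), ← exp_add]
  congr 2
  field_simp
  ring

lemma gaussianPDFReal_neg_neg (μ : ℝ) (v : ℝ≥0) (x : ℝ) :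
    gaussianPDFReal (-μ) v (-x) = gaussianPDFReal μ v x := by
  simp only [gaussianPDFReal, neg_sub_neg, ← neg_sub x μ, neg_sq]

noncomputable def antipodalMixPDFReal (v : ℝ≥0) (w : ℝ) : ℝ :=
  (gaussianPDFReal 1 v w + gaussianPDFReal (-1) v w) / 2

lemma antipodalMixPDFReal_neg (v : ℝ≥0) (w : ℝ) :
    antipodalMixPDFReal v (-w) = antipodalMixPDFReal v w := by
  rw [antipodalMixPDFReal, antipodalMixPDFReal, ← neg_neg (1 : ℝ), gaussianPDFReal_neg_neg,
    neg_neg, gaussianPDFReal_neg_neg, add_comm, neg_neg]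

lemma antipodalMixPDFReal_pos (v : ℝ≥0) (hv : v ≠ 0) (w : ℝ) : 0 < antipodalMixPDFReal v w := by
  have := gaussianPDFReal_pos 1 v w hv
  have := gaussianPDFReal_pos (-1) v w hv
  rw [antipodalMixPDFReal]
  positivity

lemma log_gaussianPDFReal_div_antipodalMixPDFReal {v : ℝ≥0} (hv : v ≠ 0) {x : ℝ}
    (hx : x = 1 ∨ x = -1) (t : ℝ) :
    log (gaussianPDFReal x v (x * t) / antipodalMixPDFReal v (x * t))
      = log 2 - softplus (-2 * t / v) := by
  have hpos : 0 < gaussianPDFReal 1 v t := gaussianPDFReal_pos 1 v t hv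
  have hsign : gaussianPDFReal x v (x * t) = gaussianPDFReal 1 v t ∧
      antipodalMixPDFReal v (x * t) = antipodalMixPDFReal v t := by
    rcases hx with rfl | rfl
    · simp only [one_mul, and_self]
    · rw [neg_one_mul]
      exact ⟨gaussianPDFReal_neg_neg 1 v t, antipodalMixPDFReal_neg v t⟩
  rw [hsign.1, hsign.2, antipodalMixPDFReal, gaussianPDFReal_neg_mean 1 hv, softplus,
    ← log_div two_ne_zero (by positivity)]
  congr 1
  field_simp

section

variable {α β : Type*} [MeasurableSpace α] [MeasurableSpace β]

lemma MeasureTheory.Measure.map_withDensity_comp {f : α → β} (hf : Measurable f)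
    (μ : Measure α) {g : β → ℝ≥0∞} (hg : Measurable g) :
    (μ.withDensity (g ∘ f)).map f = (μ.map f).withDensity g := by
  ext s hs
  rw [Measure.map_apply hf hs, withDensity_apply _ (hf hs), withDensity_apply _ hs,
    Measure.restrict_map hf hs, lintegral_map hg hf]
  rfl

lemma MeasureTheory.Measure.fst_smul (c : ℝ≥0∞) (ρ : Measure (α × β)) : (c • ρ).fst = c • ρ.fst :=
  Measure.map_smul c ρ Prod.fst

lemma MeasureTheory.Measure.snd_smul (c : ℝ≥0∞) (ρ : Measure (α × β)) : (c • ρ).snd = c • ρ.snd :=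
  Measure.map_smul c ρ Prod.snd

lemma MeasureTheory.llr_withDensity_ofReal {ρ : Measure α} [SigmaFinite ρ] {f g : α → ℝ}
    (hf : Measurable f) (hg : Measurable g) (hf0 : ∀ x, 0 ≤ f x) (hg0 : ∀ x, 0 < g x) :
    llr (ρ.withDensity fun x => ENNReal.ofReal (f x)) (ρ.withDensity fun x => ENNReal.ofReal (g x))
      =ᵐ[ρ.withDensity fun x => ENNReal.ofReal (f x)] fun x => log (f x / g x) := by
  set μ := ρ.withDensity fun x => ENNReal.ofReal (f x)
  have hright := Measure.rnDeriv_withDensity_right μ ρ hg.ennreal_ofReal.aemeasurable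
    (ae_of_all _ fun x => ENNReal.ofReal_ne_zero_iff.2 (hg0 x)) (ae_of_all _ fun _ => by simp)
  have hleft := Measure.rnDeriv_withDensity ρ hf.ennreal_ofReal
  filter_upwards [(withDensity_absolutelyContinuous ρ _).ae_le hright,
    (withDensity_absolutelyContinuous ρ _).ae_le hleft] with x hright hleft
  rw [llr, hright, hleft, ENNReal.toReal_mul, ENNReal.toReal_inv, ENNReal.toReal_ofReal (hf0 x),
    ENNReal.toReal_ofReal (hg0 x).le, inv_mul_eq_div]

end

noncomputable def signLaw : Measure ℝ :=
  (2 : ℝ≥0∞)⁻¹ • Measure.dirac 1 + (2 : ℝ≥0∞)⁻¹ • Measure.dirac (-1)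

instance : IsProbabilityMeasure signLaw :=
  ⟨by simp [signLaw, ENNReal.inv_two_add_inv_two]⟩

lemma toNNReal_sq_ne_zero {σ : ℝ} (hσ : σ ≠ 0) : (σ ^ 2).toNNReal ≠ 0 := by
  rw [Ne, Real.toNNReal_eq_zero, not_le]
  positivity

lemma map_const_add_gaussianReal_eq_map_prodMk (c : ℝ) (v : ℝ≥0) :
    (gaussianReal 0 v).map (fun n => (c, c + n)) = (gaussianReal c v).map (Prod.mk c) := by
  have hshift : gaussianReal c v = (gaussianReal 0 v).map (c + ·) := by
    rw [gaussianReal_map_const_add, zero_add]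
  rw [hshift, Measure.map_map measurable_prodMk_left (measurable_const_add c)]
  rfl

lemma jointLawXW_eq_withDensity {σ : ℝ} (hσ : σ ≠ 0) :
    jointLawXW σ = (signLaw.prod volume).withDensity
      fun q => ENNReal.ofReal (gaussianPDFReal q.1 (σ ^ 2).toNNReal q.2) := by
  have hmeas : Measurable
      fun q : ℝ × ℝ => ENNReal.ofReal (gaussianPDFReal q.1 (σ ^ 2).toNNReal q.2) := by
    unfold gaussianPDFReal; fun_prop
  have hcomponent (c : ℝ) : ((Measure.dirac c).prod volume).withDensity
      (fun q : ℝ × ℝ => ENNReal.ofReal (gaussianPDFReal q.1 (σ ^ 2).toNNReal q.2))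
      = (gaussianReal 0 (σ ^ 2).toNNReal).map (fun n => (c, c + n)) := by
    rw [Measure.dirac_prod, ← Measure.map_withDensity_comp measurable_prodMk_left _ hmeas,
      map_const_add_gaussianReal_eq_map_prodMk, gaussianReal_of_var_ne_zero c
        (toNNReal_sq_ne_zero hσ)]
    rfl
  rw [jointLawXW, signLaw, Measure.add_prod, Measure.prod_smul_left, Measure.prod_smul_left,
    withDensity_add_measure, withDensity_smul_measure, withDensity_smul_measure, hcomponent,
    hcomponent]

lemma fst_jointLawXW (σ : ℝ) : (jointLawXW σ).fst = signLaw := by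
  have hcomponent (c : ℝ) : ((gaussianReal 0 (σ ^ 2).toNNReal).map fun n => (c, c + n)).fst
      = Measure.dirac c := by
    rw [Measure.fst_map_prodMk (by fun_prop), Measure.map_const, measure_univ, one_smul]
  rw [jointLawXW, Measure.fst_add, Measure.fst_smul, Measure.fst_smul, hcomponent, hcomponent,
    signLaw]

lemma snd_jointLawXW {σ : ℝ} (hσ : σ ≠ 0) :
    (jointLawXW σ).snd = volume.withDensity
      fun w => ENNReal.ofReal (antipodalMixPDFReal (σ ^ 2).toNNReal w) := by
  have hcomponent (c : ℝ) : ((gaussianReal 0 (σ ^ 2).toNNReal).map fun n => (c, c + n)).snd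
      = volume.withDensity (gaussianPDF c (σ ^ 2).toNNReal) := by
    rw [Measure.snd_map_prodMk (by fun_prop), gaussianReal_map_const_add, zero_add,
      gaussianReal_of_var_ne_zero c (toNNReal_sq_ne_zero hσ)]
  rw [jointLawXW, Measure.snd_add, Measure.snd_smul, Measure.snd_smul, hcomponent, hcomponent,
    ← withDensity_smul _ (measurable_gaussianPDF _ _),
    ← withDensity_smul _ (measurable_gaussianPDF _ _),
    ← withDensity_add_left ((measurable_gaussianPDF _ _).const_smul _)]
  congr 1
  funext w
  have h1 := gaussianPDFReal_nonneg 1 (σ ^ 2).toNNReal w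
  have h2 := gaussianPDFReal_nonneg (-1) (σ ^ 2).toNNReal w
  simp only [Pi.add_apply, Pi.smul_apply, smul_eq_mul, antipodalMixPDFReal, gaussianPDF]
  rw [ENNReal.ofReal_div_of_pos two_pos, ENNReal.ofReal_add h1 h2, ENNReal.ofReal_ofNat,
    ENNReal.div_eq_inv_mul, mul_add]

lemma fst_prod_snd_jointLawXW {σ : ℝ} (hσ : σ ≠ 0) :
    (jointLawXW σ).fst.prod (jointLawXW σ).snd = (signLaw.prod volume).withDensity
      fun q => ENNReal.ofReal (antipodalMixPDFReal (σ ^ 2).toNNReal q.2) := by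
  rw [fst_jointLawXW, snd_jointLawXW hσ,
    prod_withDensity_right (by unfold antipodalMixPDFReal gaussianPDFReal; fun_prop)]

lemma llr_jointLawXW {σ : ℝ} (hσ : σ ≠ 0) :
    llr (jointLawXW σ) ((jointLawXW σ).fst.prod (jointLawXW σ).snd) =ᵐ[jointLawXW σ]
      fun q => log (gaussianPDFReal q.1 (σ ^ 2).toNNReal q.2 /
        antipodalMixPDFReal (σ ^ 2).toNNReal q.2) := by
  rw [fst_prod_snd_jointLawXW hσ, jointLawXW_eq_withDensity hσ]
  exact llr_withDensity_ofReal (by unfold gaussianPDFReal; fun_prop)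
    (by unfold antipodalMixPDFReal gaussianPDFReal; fun_prop)
    (fun q => gaussianPDFReal_nonneg _ _ _)
    (fun q => antipodalMixPDFReal_pos _ (toNNReal_sq_ne_zero hσ) _)

lemma gaussianReal_zero_sq_eq_map_const_mul (c : ℝ) :
    gaussianReal 0 (c ^ 2).toNNReal = (gaussianReal 0 1).map (c * ·) := by
  rw [gaussianReal_map_const_mul, mul_zero, mul_one]
  congr
  ext
  simp [sq_nonneg]

lemma integral_jointLawXW {σ : ℝ} {F : ℝ × ℝ → ℝ} (hF : Measurable F) {G : ℝ → ℝ}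
    (hG : Integrable G (gaussianReal 0 1))
    (hFG : ∀ x, x = 1 ∨ x = -1 → ∀ z, F (x, x * (1 + σ * z)) = G z) :
    ∫ q, F q ∂jointLawXW σ = ∫ z, G z ∂gaussianReal 0 1 := by
  have hcomponent (x : ℝ) (hx : x = 1 ∨ x = -1) :
      (gaussianReal 0 (σ ^ 2).toNNReal).map (fun n => (x, x + n))
        = (gaussianReal 0 1).map (fun z => (x, x * (1 + σ * z))) := by
    -- for `x = -1` the noise is realised as `-σZ`, so that `X·W = 1 + σZ` on both components
    have hsq : σ ^ 2 = (x * σ) ^ 2 := by rcases hx with rfl | rfl <;> ring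
    rw [hsq, gaussianReal_zero_sq_eq_map_const_mul, Measure.map_map (by fun_prop) (by fun_prop)]
    congr 1
    funext z
    simp only [Function.comp_apply, Prod.mk.injEq, true_and]
    ring
  have hintegrable (x : ℝ) (hx : x = 1 ∨ x = -1) :
      Integrable F ((gaussianReal 0 1).map (fun z => (x, x * (1 + σ * z)))) :=
    (integrable_map_measure hF.aestronglyMeasurable (by fun_prop)).2
      (hG.congr (ae_of_all _ fun z => (hFG x hx z).symm))
  have hintegral (x : ℝ) (hx : x = 1 ∨ x = -1) :
      ∫ q, F q ∂(gaussianReal 0 1).map (fun z => (x, x * (1 + σ * z)))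
        = ∫ z, G z ∂gaussianReal 0 1 := by
    rw [integral_map (by fun_prop) hF.aestronglyMeasurable]
    exact integral_congr_ae (ae_of_all _ (hFG x hx))
  have h1 : (1 : ℝ) = 1 ∨ (1 : ℝ) = -1 := .inl rfl
  have h2 : (-1 : ℝ) = 1 ∨ (-1 : ℝ) = -1 := .inr rfl
  rw [jointLawXW, hcomponent 1 h1, hcomponent (-1) h2,
    integral_add_measure ((hintegrable 1 h1).smul_measure (by simp))
      ((hintegrable (-1) h2).smul_measure (by simp)),
    integral_smul_measure, integral_smul_measure, hintegral 1 h1, hintegral (-1) h2, ← add_smul]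
  norm_num

lemma mutualInfoAntipodalAWGN_eq {σ : ℝ} (hσ : σ ≠ 0) :
    mutualInfoAntipodalAWGN σ
      = (log 2 - ∫ z, softplus (-2 / σ ^ 2 + -2 / σ * z) ∂gaussianReal 0 1) / log 2 := by
  have hv : ((σ ^ 2).toNNReal : ℝ) = σ ^ 2 := Real.coe_toNNReal _ (sq_nonneg σ)
  rw [mutualInfoAntipodalAWGN, klBits, integral_congr_ae (llr_jointLawXW hσ),
    integral_jointLawXW (G := fun z => log 2 - softplus (-2 / σ ^ 2 + -2 / σ * z))
      (by unfold antipodalMixPDFReal gaussianPDFReal; fun_prop)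
      ((integrable_const _).sub (integrable_softplus_affine _ _)),
    integral_sub (integrable_const _) (integrable_softplus_affine _ _), integral_const]
  · simp
  · intro x hx z
    rw [log_gaussianPDFReal_div_antipodalMixPDFReal (toNNReal_sq_ne_zero hσ) hx, hv]
    congr 2
    field_simp
    ring

lemma tendsto_mutualInfoAntipodalAWGN_atTop :
    Tendsto mutualInfoAntipodalAWGN atTop (nhds 0) := by
  have ha : Tendsto (fun σ : ℝ => -2 / σ ^ 2) atTop (nhds 0) :=
    tendsto_const_nhds.div_atTop (tendsto_pow_atTop two_ne_zero)
  have hb : Tendsto (fun σ : ℝ => -2 / σ) atTop (nhds 0) :=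
    tendsto_const_nhds.div_atTop tendsto_id
  have hlim := ((tendsto_integral_softplus_affine ha hb).const_sub (log 2)).div_const (log 2)
  rw [sub_self, zero_div] at hlim
  exact hlim.congr' <|
    (eventually_ne_atTop 0).mono fun σ hσ => (mutualInfoAntipodalAWGN_eq hσ).symm

/-- The maximum equivocation loss
`(h(p_W) - 1 + I(X;W)) / (h(p_W) - h(p))`, with `p = Φ(-1/σ_M)` and
`p_W = Φ(-1/√(σ_M² + σ_W²))`, tends to `0` as the wiretap noise power `σ_W` grows. -/
theorem max_equivocation_loss_tendsto_zero (σM : ℝ) (hσM : 0 < σM) (p : ℝ)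
    (hp : p = stdNormalCDF (-1 / σM)) :
    Tendsto
      (fun σW : ℝ =>
        (binEnt (stdNormalCDF (-1 / Real.sqrt (σM ^ 2 + σW ^ 2))) - 1 +
            mutualInfoAntipodalAWGN (Real.sqrt (σM ^ 2 + σW ^ 2))) /
          (binEnt (stdNormalCDF (-1 / Real.sqrt (σM ^ 2 + σW ^ 2))) - binEnt p))
      atTop (nhds 0) := by
  have hσ : Tendsto (fun σW : ℝ => √(σM ^ 2 + σW ^ 2)) atTop atTop :=
    tendsto_sqrt_atTop.comp (tendsto_atTop_add_const_left _ _ (tendsto_pow_atTop two_ne_zero))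
  have hent : Tendsto (fun σW : ℝ => binEnt (stdNormalCDF (-1 / √(σM ^ 2 + σW ^ 2))))
      atTop (nhds 1) := by
    have := ((continuous_binEnt.comp continuous_stdNormalCDF).tendsto 0).comp
      ((tendsto_const_nhds (x := (-1 : ℝ))).div_atTop hσ)
    rwa [Function.comp_apply, stdNormalCDF_zero, binEnt_two_inv] at this
  have hp_ne : binEnt p ≠ 1 := by
    rw [hp]
    exact (binEnt_lt_one
      (stdNormalCDF_lt_two_inv (div_neg_of_neg_of_pos neg_one_lt_zero hσM)).ne).ne
  have hlim := ((hent.sub_const 1).add (tendsto_mutualInfoAntipodalAWGN_atTop.comp hσ)).div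
    (hent.sub_const (binEnt p)) (sub_ne_zero.2 hp_ne.symm)
  rw [sub_self, zero_add, zero_div] at hlim
  exact hlim
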